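/- Let M ∈ ℝ^{n×p}, F ∈ ℝ^{p×q}, N ∈ ℝ^{q×n}, let P ∈ ℝ^{p×p} be symmetric positive definite, suppose Fᵀ F ⪯ I_q, and let ε > 0 be a scalar. Then M F N + Nᵀ Fᵀ Mᵀ ⪯ ε M P⁻¹ Mᵀ + (1/ε) Nᵀ Fᵀ P F N, where A ⪯ B means B − A is positive semidefinite (the Loewner order). -/
import Mathlib


open Matrix

/-- Lemma 2: if `P > 0` is symmetric positive definite, `Fᵀ F ⪯ I` and `ε > 0`, then
`M F N + Nᵀ Fᵀ Mᵀ ⪯ ε M P⁻¹ Mᵀ + (1/ε) Nᵀ Fᵀ P F N` in the Loewner order. -/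
theorem mfn_add_transpose_loewner_le
    (n p q : ℕ)
    (M : Matrix (Fin n) (Fin p) ℝ) (F : Matrix (Fin p) (Fin q) ℝ)
    (N : Matrix (Fin q) (Fin n) ℝ) (P : Matrix (Fin p) (Fin p) ℝ)
    (hP : P.PosDef) (hF : (1 - Fᵀ * F).PosSemidef) (ε : ℝ) (hε : 0 < ε) :
    (ε • (M * P⁻¹ * Mᵀ) + (1 / ε) • (Nᵀ * Fᵀ * P * F * N)
      - (M * F * N + Nᵀ * Fᵀ * Mᵀ)).PosSemidef := by
  set s := Real.sqrt ε with hs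
  have hspos : 0 < s := Real.sqrt_pos.mpr hε
  have hs2 : s * s = ε := Real.mul_self_sqrt hε.le
  have hdet : IsUnit P.det := isUnit_iff_ne_zero.mpr hP.det_pos.ne'
  set X : Matrix (Fin p) (Fin n) ℝ := s • (P⁻¹ * Mᵀ) - (1 / s) • (F * N) with hX
  have key : Xᴴ * P * X =
      ε • (M * P⁻¹ * Mᵀ) + (1 / ε) • (Nᵀ * Fᵀ * P * F * N)
        - (M * F * N + Nᵀ * Fᵀ * Mᵀ) := by
    have hPinv : P⁻¹ * P = 1 := Matrix.nonsing_inv_mul P hdet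
    have hPT : Pᵀ = P := by simpa using hP.isHermitian.eq
    have hPinvT : P⁻¹ᵀ = P⁻¹ := by rw [Matrix.transpose_nonsing_inv, hPT]
    have hXH : Xᴴ = s • (M * P⁻¹) - (1 / s) • (Nᵀ * Fᵀ) := by
      simp [hX, Matrix.conjTranspose_sub, Matrix.conjTranspose_smul,
        Matrix.conjTranspose_mul, hPinvT, hP.isHermitian.inv.eq]
    rw [hXH, hX]
    have h1 : (1 : ℝ) / s * s = 1 := by field_simp
    have h2 : s * (1 / s) = 1 := by field_simp
    have h3 : (1 : ℝ) / s * (1 / s) = 1 / ε := by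
      rw [div_mul_div_comm, one_mul, hs2]
    have e1 : M * P⁻¹ * P * (P⁻¹ * Mᵀ) = M * P⁻¹ * Mᵀ := by
      rw [Matrix.mul_assoc (M * P⁻¹) P, ← Matrix.mul_assoc P,
        Matrix.mul_nonsing_inv P hdet, Matrix.one_mul]
    have e2 : M * P⁻¹ * P * (F * N) = M * F * N := by
      rw [Matrix.mul_assoc M, hPinv, Matrix.mul_one, Matrix.mul_assoc]
    have e3 : Nᵀ * Fᵀ * P * (P⁻¹ * Mᵀ) = Nᵀ * Fᵀ * Mᵀ := by
      rw [Matrix.mul_assoc (Nᵀ * Fᵀ) P, ← Matrix.mul_assoc P,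
        Matrix.mul_nonsing_inv P hdet, Matrix.one_mul]
    have e4 : Nᵀ * Fᵀ * P * (F * N) = Nᵀ * Fᵀ * P * F * N :=
      (Matrix.mul_assoc _ F N).symm
    simp only [Matrix.sub_mul, Matrix.mul_sub, Matrix.smul_mul, Matrix.mul_smul,
      smul_add, smul_sub, smul_neg, neg_smul, smul_smul, hs2, h1, h2, h3,
      e1, e2, e3, e4, one_smul]
    abel
  rw [← key]
  exact hP.posSemidef.conjTranspose_mul_mul_same X
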